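/- arXiv:1011.3839 — 3 statements merged into one kernel-verified Lean document; each statement's English description precedes it below -/
import Mathlib

section
/- Let A and B be associative unital k-algebras and R : B ⊗ A → A ⊗ B a linear map, written R(b ⊗ a) = a_R ⊗ b_R, satisfying: R(b ⊗ 1) = 1 ⊗ b, R(1 ⊗ a) = a ⊗ 1, (aa')_R ⊗ b_R = a_R a'_r ⊗ (b_R)_r, and a_R ⊗ (bb')_R = a_{R_r} ⊗ b_r b'_R (where r denotes a second copy of R). Then the multiplication on A ⊗ B defined by (a ⊗ b)(a' ⊗ b') = a·a'_R ⊗ b_R·b' is associative with unit 1 ⊗ 1, i.e. it makes A ⊗ B into an associative unital k-algebra. -/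
open TensorProduct LinearMap

noncomputable section
namespace IUT

variable {k : Type*} [Field k]

section Twisting
variable {A B : Type*} [AddCommGroup A] [Module k A] [AddCommGroup B] [Module k B]

/-- The twisted-tensor-product multiplication map on `A ⊗ B` determined by
multiplications `mA`, `mB` and a linear map `R : B ⊗ A →ₗ A ⊗ B`. -/
def mulOf (mA : A ⊗[k] A →ₗ[k] A) (mB : B ⊗[k] B →ₗ[k] B)
    (R : B ⊗[k] A →ₗ[k] A ⊗[k] B) :
    (A ⊗[k] B) ⊗[k] (A ⊗[k] B) →ₗ[k] A ⊗[k] B :=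
  TensorProduct.map mA mB
    ∘ₗ (TensorProduct.assoc k A A (B ⊗[k] B)).symm.toLinearMap
    ∘ₗ TensorProduct.map LinearMap.id
        ((TensorProduct.assoc k A B B).toLinearMap
          ∘ₗ TensorProduct.map R LinearMap.id
          ∘ₗ (TensorProduct.assoc k B A B).symm.toLinearMap)
    ∘ₗ (TensorProduct.assoc k A B (A ⊗[k] B)).toLinearMap

/-- The axioms of a twisting map, relative to multiplications `mA`, `mB`
with units `uA`, `uB`. -/
def IsTwistingMapMul (mA : A ⊗[k] A →ₗ[k] A) (uA : A)
    (mB : B ⊗[k] B →ₗ[k] B) (uB : B)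
    (R : B ⊗[k] A →ₗ[k] A ⊗[k] B) : Prop :=
  (∀ b : B, R (b ⊗ₜ[k] uA) = uA ⊗ₜ[k] b) ∧
  (∀ a : A, R (uB ⊗ₜ[k] a) = a ⊗ₜ[k] uB) ∧
  (R ∘ₗ TensorProduct.map LinearMap.id mA =
    TensorProduct.map mA LinearMap.id
      ∘ₗ (TensorProduct.assoc k A A B).symm.toLinearMap
      ∘ₗ TensorProduct.map LinearMap.id R
      ∘ₗ (TensorProduct.assoc k A B A).toLinearMap
      ∘ₗ TensorProduct.map R LinearMap.id
      ∘ₗ (TensorProduct.assoc k B A A).symm.toLinearMap) ∧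
  (R ∘ₗ TensorProduct.map mB LinearMap.id =
    TensorProduct.map LinearMap.id mB
      ∘ₗ (TensorProduct.assoc k A B B).toLinearMap
      ∘ₗ TensorProduct.map R LinearMap.id
      ∘ₗ (TensorProduct.assoc k B A B).symm.toLinearMap
      ∘ₗ TensorProduct.map LinearMap.id R
      ∘ₗ (TensorProduct.assoc k B B A).toLinearMap)

/-- The new twisting map `R'` of the invariance-under-twisting theorem:
`R'(b ⊗ a) = ((a₍₀₎)_R)_[0] ⊗ ((a₍₀₎)_R)_[1] · b_R · a₍₁₎`. -/
def twistPrime (mB : B ⊗[k] B →ₗ[k] B) (R : B ⊗[k] A →ₗ[k] A ⊗[k] B)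
    (ρ lam : A →ₗ[k] A ⊗[k] B) : B ⊗[k] A →ₗ[k] A ⊗[k] B :=
  TensorProduct.map LinearMap.id (mB ∘ₗ TensorProduct.map LinearMap.id mB)
    ∘ₗ (TensorProduct.assoc k A B (B ⊗[k] B)).toLinearMap
    ∘ₗ (TensorProduct.assoc k (A ⊗[k] B) B B).toLinearMap
    ∘ₗ TensorProduct.map (TensorProduct.map lam LinearMap.id) LinearMap.id
    ∘ₗ TensorProduct.map R LinearMap.id
    ∘ₗ (TensorProduct.assoc k B A B).symm.toLinearMap
    ∘ₗ TensorProduct.map LinearMap.id ρ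

/-- The right-hand side of condition (4.7):
`a ⊗ a' ↦ a_[0] * (a'_R)_[0] ⊗ (a'_R)_[1] (a_[1])_R`. -/
def lamMulMap (st : A ⊗[k] A →ₗ[k] A) (mB : B ⊗[k] B →ₗ[k] B)
    (R : B ⊗[k] A →ₗ[k] A ⊗[k] B) (lam : A →ₗ[k] A ⊗[k] B) :
    A ⊗[k] A →ₗ[k] A ⊗[k] B :=
  TensorProduct.map st mB
    ∘ₗ (TensorProduct.assoc k A A (B ⊗[k] B)).symm.toLinearMap
    ∘ₗ TensorProduct.map LinearMap.id (TensorProduct.assoc k A B B).toLinearMap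
    ∘ₗ TensorProduct.map LinearMap.id (TensorProduct.map lam LinearMap.id)
    ∘ₗ TensorProduct.map LinearMap.id R
    ∘ₗ (TensorProduct.assoc k A B A).toLinearMap
    ∘ₗ TensorProduct.map lam LinearMap.id

/-- `a ↦ a₍₀₎_[0] ⊗ a₍₀₎_[1] · a₍₁₎` : apply `g` to the first leg of `f` and
multiply the `B`-legs; used in conditions (4.8)/(4.9). -/
def sweedlerContract (mB : B ⊗[k] B →ₗ[k] B) (f g : A →ₗ[k] A ⊗[k] B) :
    A →ₗ[k] A ⊗[k] B :=
  TensorProduct.map LinearMap.id mB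
    ∘ₗ (TensorProduct.assoc k A B B).toLinearMap
    ∘ₗ TensorProduct.map g LinearMap.id
    ∘ₗ f

end Twisting

/-- The twisting-map axioms for two algebras with their ring multiplications. -/
def IsTwistingMap {A B : Type*} [Ring A] [Algebra k A] [Ring B] [Algebra k B]
    (R : B ⊗[k] A →ₗ[k] A ⊗[k] B) : Prop :=
  IsTwistingMapMul (LinearMap.mul' k A) (1 : A) (LinearMap.mul' k B) (1 : B) R

/-!
In the twisted tensor product `R (b ⊗ a)` is the product `(1 ⊗ b)(a ⊗ 1)`, and each product of
pure tensors is a sandwich `(a ⊗ b)(a' ⊗ b') = (a ⊗ 1) · R (b ⊗ a') · (1 ⊗ b')`. The last two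
twisting axioms say that `R (b ⊗ a a')` and `R (b b' ⊗ a)` are the products
`R (b ⊗ a) · (a' ⊗ 1)` and `(1 ⊗ b) · R (b' ⊗ a)`, which lets the outer factors of a sandwich
pass through a product. Hence both bracketings of `(a ⊗ b)(a' ⊗ b')(a'' ⊗ b'')` are the sandwich
of `R (b ⊗ a') · R (b' ⊗ a'')` between `a ⊗ 1` and `1 ⊗ b''`.
-/

section TwistedMul

variable {A B : Type*} [Ring A] [Algebra k A] [Ring B] [Algebra k B]
variable {R : B ⊗[k] A →ₗ[k] A ⊗[k] B}

local notation "μ" => mulOf (LinearMap.mul' k A) (LinearMap.mul' k B) R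

lemma map_mulLeft_mulRight_map_mulLeft_mulRight (a a' : A) (b b' : B) (x : A ⊗[k] B) :
    map (mulLeft k a) (mulRight k b) (map (mulLeft k a') (mulRight k b') x) =
      map (mulLeft k (a * a')) (mulRight k (b' * b)) x := by
  rw [← LinearMap.comp_apply, ← map_comp]
  congr 2 <;> ext <;> simp [mul_assoc]

lemma mulOf_tmul_tmul (a a' : A) (b b' : B) :
    μ ((a ⊗ₜ b) ⊗ₜ (a' ⊗ₜ b')) = map (mulLeft k a) (mulRight k b') (R (b ⊗ₜ a')) := by
  simp only [mulOf, LinearMap.comp_apply, LinearEquiv.coe_coe, assoc_tmul, assoc_symm_tmul,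
    map_tmul, LinearMap.id_apply]
  induction R (b ⊗ₜ a') using TensorProduct.induction_on with
  | zero => simp
  | tmul p q => simp
  | add u v hu hv => simp only [add_tmul, tmul_add, map_add, hu, hv]

lemma mulOf_tmul_left (p : A) (q : B) (v : A ⊗[k] B) :
    μ ((p ⊗ₜ q) ⊗ₜ v) = map (mulLeft k p) (mulRight k 1) (μ ((1 ⊗ₜ q) ⊗ₜ v)) := by
  induction v using TensorProduct.induction_on with
  | zero => simp
  | tmul p' q' => simp only [mulOf_tmul_tmul, map_mulLeft_mulRight_map_mulLeft_mulRight, mul_one]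
  | add u v hu hv => simp only [tmul_add, map_add, hu, hv]

lemma mulOf_tmul_right (w : A ⊗[k] B) (p : A) (q : B) :
    μ (w ⊗ₜ (p ⊗ₜ q)) = map (mulLeft k 1) (mulRight k q) (μ (w ⊗ₜ (p ⊗ₜ 1))) := by
  induction w using TensorProduct.induction_on with
  | zero => simp
  | tmul p' q' => simp only [mulOf_tmul_tmul, map_mulLeft_mulRight_map_mulLeft_mulRight, one_mul]
  | add u v hu hv => simp only [add_tmul, map_add, hu, hv]

namespace IsTwistingMap

lemma apply_tmul_mul (hR : IsTwistingMap R) (b : B) (a a' : A) : R (b ⊗ₜ (a * a')) = μ (R (b ⊗ₜ a) ⊗ₜ (a' ⊗ₜ 1)) := by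
  have h := LinearMap.congr_fun hR.2.2.1 (b ⊗ₜ (a ⊗ₜ a'))
  simp only [LinearMap.comp_apply, map_tmul, LinearMap.id_apply, mul'_apply, LinearEquiv.coe_coe,
    assoc_symm_tmul] at h
  rw [h]
  induction R (b ⊗ₜ a) using TensorProduct.induction_on with
  | zero => simp
  | tmul p q =>
    rw [mulOf_tmul_tmul]
    simp only [assoc_tmul, map_tmul, LinearMap.id_apply]
    induction R (q ⊗ₜ a') using TensorProduct.induction_on with
    | zero => simp
    | tmul α β => simp
    | add u v hu hv => simp only [tmul_add, map_add, hu, hv]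
  | add u v hu hv => simp only [add_tmul, map_add, hu, hv]

lemma apply_mul_tmul (hR : IsTwistingMap R) (b b' : B) (a : A) :
    R ((b * b') ⊗ₜ a) = μ ((1 ⊗ₜ b) ⊗ₜ R (b' ⊗ₜ a)) := by
  have h := LinearMap.congr_fun hR.2.2.2 ((b ⊗ₜ b') ⊗ₜ a)
  simp only [LinearMap.comp_apply, map_tmul, LinearMap.id_apply, mul'_apply, LinearEquiv.coe_coe,
    assoc_tmul] at h
  rw [h]
  induction R (b' ⊗ₜ a) using TensorProduct.induction_on with
  | zero => simp
  | tmul p q =>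
    rw [mulOf_tmul_tmul]
    simp only [assoc_symm_tmul, map_tmul, LinearMap.id_apply]
    induction R (b ⊗ₜ p) using TensorProduct.induction_on with
    | zero => simp
    | tmul α β => simp
    | add u v hu hv => simp only [add_tmul, map_add, hu, hv]
  | add u v hu hv => simp only [tmul_add, map_add, hu, hv]

lemma mulOf_map_tmul (hR : IsTwistingMap R) (a a'' : A) (b' b'' : B) (w : A ⊗[k] B) :
    μ (map (mulLeft k a) (mulRight k b') w ⊗ₜ (a'' ⊗ₜ b'')) =
      map (mulLeft k a) (mulRight k b'') (μ (w ⊗ₜ R (b' ⊗ₜ a''))) := by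
  induction w using TensorProduct.induction_on with
  | zero => simp
  | tmul p q =>
    rw [map_tmul, mulLeft_apply, mulRight_apply, mulOf_tmul_tmul, hR.apply_mul_tmul,
      mulOf_tmul_left p q, map_mulLeft_mulRight_map_mulLeft_mulRight, one_mul]
  | add u v hu hv => simp only [map_add, add_tmul, hu, hv]

lemma mulOf_tmul_map (hR : IsTwistingMap R) (a a' : A) (b b'' : B) (v : A ⊗[k] B) :
    μ ((a ⊗ₜ b) ⊗ₜ map (mulLeft k a') (mulRight k b'') v) =
      map (mulLeft k a) (mulRight k b'') (μ (R (b ⊗ₜ a') ⊗ₜ v)) := by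
  induction v using TensorProduct.induction_on with
  | zero => simp
  | tmul p' q' =>
    rw [map_tmul, mulLeft_apply, mulRight_apply, mulOf_tmul_tmul, hR.apply_tmul_mul,
      mulOf_tmul_right _ p' q', map_mulLeft_mulRight_map_mulLeft_mulRight, mul_one]
  | add u v hu hv => simp only [map_add, tmul_add, hu, hv]

lemma mulOf_assoc (hR : IsTwistingMap R) (x y z : A ⊗[k] B) :
    μ (μ (x ⊗ₜ y) ⊗ₜ z) = μ (x ⊗ₜ μ (y ⊗ₜ z)) := by
  induction x using TensorProduct.induction_on with
  | zero => simp
  | add u v hu hv => simp only [add_tmul, map_add, hu, hv]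
  | tmul a b =>
    induction y using TensorProduct.induction_on with
    | zero => simp
    | add u v hu hv => simp only [add_tmul, tmul_add, map_add, hu, hv]
    | tmul a' b' =>
      induction z using TensorProduct.induction_on with
      | zero => simp
      | add u v hu hv => simp only [tmul_add, map_add, hu, hv]
      | tmul a'' b'' =>
        rw [mulOf_tmul_tmul, mulOf_tmul_tmul, hR.mulOf_map_tmul, hR.mulOf_tmul_map]

lemma mulOf_one_tmul (hR : IsTwistingMap R) (x : A ⊗[k] B) : μ ((1 ⊗ₜ 1) ⊗ₜ x) = x := by
  induction x using TensorProduct.induction_on with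
  | zero => simp
  | tmul a b => simp [mulOf_tmul_tmul, hR.2.1]
  | add u v hu hv => simp only [tmul_add, map_add, hu, hv]

lemma mulOf_tmul_one (hR : IsTwistingMap R) (x : A ⊗[k] B) : μ (x ⊗ₜ (1 ⊗ₜ 1)) = x := by
  induction x using TensorProduct.induction_on with
  | zero => simp
  | tmul a b => simp [mulOf_tmul_tmul, hR.1]
  | add u v hu hv => simp only [add_tmul, map_add, hu, hv]

end IsTwistingMap

end TwistedMul

/-- If `R : B ⊗ A → A ⊗ B` is a twisting map, then the
multiplication `(a ⊗ b)(a' ⊗ b') = a a'_R ⊗ b_R b'` on `A ⊗ B` is associative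
with unit `1 ⊗ 1`. -/
theorem twisted_tensor_product_is_algebra
    {A B : Type*} [Ring A] [Algebra k A] [Ring B] [Algebra k B]
    (R : B ⊗[k] A →ₗ[k] A ⊗[k] B) (hR : IsTwistingMap R) :
    (∀ x : A ⊗[k] B,
      mulOf (LinearMap.mul' k A) (LinearMap.mul' k B) R
        (((1 : A) ⊗ₜ[k] (1 : B)) ⊗ₜ[k] x) = x) ∧
    (∀ x : A ⊗[k] B,
      mulOf (LinearMap.mul' k A) (LinearMap.mul' k B) R
        (x ⊗ₜ[k] ((1 : A) ⊗ₜ[k] (1 : B))) = x) ∧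
    (∀ x y z : A ⊗[k] B,
      mulOf (LinearMap.mul' k A) (LinearMap.mul' k B) R
        ((mulOf (LinearMap.mul' k A) (LinearMap.mul' k B) R (x ⊗ₜ[k] y)) ⊗ₜ[k] z) =
      mulOf (LinearMap.mul' k A) (LinearMap.mul' k B) R
        (x ⊗ₜ[k] (mulOf (LinearMap.mul' k A) (LinearMap.mul' k B) R (y ⊗ₜ[k] z)))) := by
  exact ⟨hR.mulOf_one_tmul, hR.mulOf_tmul_one, hR.mulOf_assoc⟩
end IUT
end
end

section
/- Let A ⊗_R B be a twisted tensor product of k-algebras, and suppose the underlying vector space of A carries a second associative unital algebra structure A' with the same unit, multiplication written a * a'. Suppose ρ, λ : A → A ⊗ B are linear maps, written ρ(a) = a_(0) ⊗ a_(1) and λ(a) = a_[0] ⊗ a_[1], such that: ρ is an algebra map from A' to A ⊗_R B; λ(1) = 1 ⊗ 1; λ(aa') = a_[0] * (a'_R)_[0] ⊗ (a'_R)_[1] (a_[1])_R for all a, a' ∈ A; a_(0)[0] ⊗ a_(0)[1] a_(1) = a ⊗ 1; and a_[0](0) ⊗ a_[0](1) a_[1] = a ⊗ 1. Then the map R' :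 B ⊗ A' → A' ⊗ B defined by R'(b ⊗ a) = ((a_(0))_R)_[0] ⊗ ((a_(0))_R)_[1] b_R a_(1) is a twisting map. -/
open TensorProduct LinearMap

noncomputable section
namespace IUT

variable {k : Type*} [Field k]

/-!
The map `φ (a ⊗ b) = ρ(a) (1 ⊗ b)` is a linear bijection `A ⊗ B → A ⊗_R B`, with inverse
`a ⊗ b ↦ λ(a) (1 ⊗ b)` by (4.8) and (4.9). Since `R'(b ⊗ a) = φ⁻¹ ((1 ⊗ b) ρ(a))` and `ρ` is
multiplicative, `φ` carries the multiplication on `A ⊗ B` built from `*` and `R'` to the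
associative multiplication of `A ⊗_R B`, so the former is associative as well. Finally, any map
`R'` that is normalised on the units and yields an associative multiplication is a twisting map:
its two compatibility conditions with the multiplications are associativity evaluated on
`(1 ⊗ b)(a ⊗ 1)(a' ⊗ 1)` and on `(1 ⊗ b)(1 ⊗ b')(a ⊗ 1)`.
-/

section TwistedMul
variable {A B : Type*} [AddCommGroup A] [Module k A] [AddCommGroup B] [Module k B]

def twistedMul (mA : A ⊗[k] A →ₗ[k] A) (mB : B ⊗[k] B →ₗ[k] B)
    (R : B ⊗[k] A →ₗ[k] A ⊗[k] B) : A ⊗[k] B →ₗ[k] A ⊗[k] B →ₗ[k] A ⊗[k] B :=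
  (TensorProduct.mk k _ _).compr₂ (mulOf mA mB R)

variable {mA : A ⊗[k] A →ₗ[k] A} {uA : A} {mB : B ⊗[k] B →ₗ[k] B} {uB : B}
  {R : B ⊗[k] A →ₗ[k] A ⊗[k] B}

lemma twistedMul_tmul (a : A) (b : B) (a' : A) (b' : B) :
    twistedMul mA mB R (a ⊗ₜ b) (a' ⊗ₜ b') =
      map (mA ∘ₗ mk k A A a) (mB ∘ₗ (mk k B B).flip b') (R (b ⊗ₜ a')) := by
  simp only [twistedMul, mulOf, compr₂_apply, mk_apply, coe_comp, Function.comp_apply,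
    LinearEquiv.coe_coe, assoc_tmul, map_tmul, id_coe, id_eq, assoc_symm_tmul]
  induction R (b ⊗ₜ a') using TensorProduct.induction_on with
  | zero => simp
  | tmul x y => simp
  | add u v hu hv => simp only [add_tmul, tmul_add, map_add, hu, hv]

lemma twistedMul_unit_tmul_tmul_unit (hmA : ∀ a, mA (uA ⊗ₜ a) = a)
    (hmB : ∀ b, mB (b ⊗ₜ uB) = b) (b : B) (a : A) :
    twistedMul mA mB R (uA ⊗ₜ b) (a ⊗ₜ uB) = R (b ⊗ₜ a) := by
  have hl : mA ∘ₗ mk k A A uA = LinearMap.id := LinearMap.ext hmA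
  have hr : mB ∘ₗ (mk k B B).flip uB = LinearMap.id := LinearMap.ext hmB
  rw [twistedMul_tmul, hl, hr, map_id, id_apply]

lemma twistedMul_tmul_unit_eq (hmB : ∀ b, mB (b ⊗ₜ uB) = b) (u : A ⊗[k] B) (a : A) :
    twistedMul mA mB R u (a ⊗ₜ uB) =
      map mA LinearMap.id ((TensorProduct.assoc k A A B).symm
        (map LinearMap.id R (TensorProduct.assoc k A B A (u ⊗ₜ a)))) := by
  have hr : mB ∘ₗ (mk k B B).flip uB = LinearMap.id := LinearMap.ext hmB
  induction u using TensorProduct.induction_on with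
  | zero => simp
  | add u v hu hv => simp only [map_add, LinearMap.add_apply, add_tmul, hu, hv]
  | tmul x y =>
    rw [twistedMul_tmul, hr, assoc_tmul, map_tmul]
    induction R (y ⊗ₜ a) using TensorProduct.induction_on with
    | zero => simp
    | tmul p q => simp
    | add s t hs ht => simp only [map_add, tmul_add, hs, ht]

lemma twistedMul_unit_tmul_eq (hmA : ∀ a, mA (uA ⊗ₜ a) = a) (b : B) (v : A ⊗[k] B) :
    twistedMul mA mB R (uA ⊗ₜ b) v =
      map LinearMap.id mB (TensorProduct.assoc k A B B
        (map R LinearMap.id ((TensorProduct.assoc k B A B).symm (b ⊗ₜ v)))) := by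
  have hl : mA ∘ₗ mk k A A uA = LinearMap.id := LinearMap.ext hmA
  induction v using TensorProduct.induction_on with
  | zero => simp
  | add u v hu hv => simp only [map_add, tmul_add, hu, hv]
  | tmul x y =>
    rw [twistedMul_tmul, hl, assoc_symm_tmul, map_tmul]
    induction R (b ⊗ₜ x) using TensorProduct.induction_on with
    | zero => simp
    | tmul p q => simp
    | add s t hs ht => simp only [map_add, add_tmul, hs, ht]

theorem isTwistingMapMul_of_twistedMul_assoc (hmA : ∀ a, mA (uA ⊗ₜ a) = a)
    (hmB : ∀ b, mB (b ⊗ₜ uB) = b) (hRA : ∀ b, R (b ⊗ₜ uA) = uA ⊗ₜ b)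
    (hRB : ∀ a, R (uB ⊗ₜ a) = a ⊗ₜ uB)
    (hassoc : ∀ x y z, twistedMul mA mB R (twistedMul mA mB R x y) z =
      twistedMul mA mB R x (twistedMul mA mB R y z)) :
    IsTwistingMapMul mA uA mB uB R := by
  have hAA (a a' : A) : twistedMul mA mB R (a ⊗ₜ uB) (a' ⊗ₜ uB) = mA (a ⊗ₜ a') ⊗ₜ uB := by
    simp [twistedMul_tmul, hRB, hmB]
  have hBB (b b' : B) : twistedMul mA mB R (uA ⊗ₜ b) (uA ⊗ₜ b') = uA ⊗ₜ mB (b ⊗ₜ b') := by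
    simp [twistedMul_tmul, hRA, hmA]
  refine ⟨hRA, hRB, ext_threefold' fun b a a' => ?_, ext_threefold fun b b' a => ?_⟩
  · calc R (b ⊗ₜ mA (a ⊗ₜ a'))
        = twistedMul mA mB R (uA ⊗ₜ b) (twistedMul mA mB R (a ⊗ₜ uB) (a' ⊗ₜ uB)) := by
          rw [hAA, twistedMul_unit_tmul_tmul_unit hmA hmB]
      _ = twistedMul mA mB R (R (b ⊗ₜ a)) (a' ⊗ₜ uB) := by
          rw [← hassoc, twistedMul_unit_tmul_tmul_unit hmA hmB]
      _ = _ := by simp [twistedMul_tmul_unit_eq hmB]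
  · calc R (mB (b ⊗ₜ b') ⊗ₜ a)
        = twistedMul mA mB R (twistedMul mA mB R (uA ⊗ₜ b) (uA ⊗ₜ b')) (a ⊗ₜ uB) := by
          rw [hBB, twistedMul_unit_tmul_tmul_unit hmA hmB]
      _ = twistedMul mA mB R (uA ⊗ₜ b) (R (b' ⊗ₜ a)) := by
          rw [hassoc, twistedMul_unit_tmul_tmul_unit hmA hmB]
      _ = _ := by simp [twistedMul_unit_tmul_eq hmA]

end TwistedMul

section RightExtend
variable {A B : Type*} [AddCommGroup A] [Module k A] [Ring B] [Algebra k B]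

def rightExtend (f : A →ₗ[k] A ⊗[k] B) : A ⊗[k] B →ₗ[k] A ⊗[k] B :=
  map LinearMap.id (mul' k B) ∘ₗ (TensorProduct.assoc k A B B).toLinearMap
    ∘ₗ map f LinearMap.id

lemma rightExtend_tmul (f : A →ₗ[k] A ⊗[k] B) (x : A) (y : B) :
    rightExtend f (x ⊗ₜ y) = lTensor A (mulRight k y) (f x) := by
  simp only [rightExtend, coe_comp, Function.comp_apply, map_tmul, id_coe, id_eq,
    LinearEquiv.coe_coe]
  induction f x using TensorProduct.induction_on with
  | zero => simp
  | tmul p q => simp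
  | add s t hs ht => simp only [add_tmul, map_add, hs, ht]

lemma rightExtend_lTensor_mulRight (f : A →ₗ[k] A ⊗[k] B) (c : B) (v : A ⊗[k] B) :
    rightExtend f (lTensor A (mulRight k c) v) = lTensor A (mulRight k c) (rightExtend f v) := by
  induction v using TensorProduct.induction_on with
  | zero => simp
  | tmul x y =>
    rw [lTensor_tmul, rightExtend_tmul, rightExtend_tmul, mulRight_apply, mulRight_mul,
      lTensor_comp, comp_apply]
  | add s t hs ht => simp only [map_add, hs, ht]

lemma leftInverse_rightExtend {f g : A →ₗ[k] A ⊗[k] B}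
    (h : ∀ a, sweedlerContract (mul' k B) f g a = a ⊗ₜ 1) :
    Function.LeftInverse (rightExtend g) (rightExtend f) := by
  intro v
  induction v using TensorProduct.induction_on with
  | zero => simp
  | tmul x y =>
    have hx : rightExtend g (f x) = x ⊗ₜ 1 := h x
    rw [rightExtend_tmul, rightExtend_lTensor_mulRight, hx, lTensor_tmul, mulRight_apply,
      one_mul]
  | add s t hs ht => simp only [map_add, hs, ht]

end RightExtend

section TwistedTensorProduct
variable {A B : Type*} [Ring A] [Algebra k A] [Ring B] [Algebra k B]
  {R : B ⊗[k] A →ₗ[k] A ⊗[k] B}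

local notation "μ" => twistedMul (mul' k A) (mul' k B) R

lemma twistedMul_tmul_eq_map (a : A) (b : B) (a' : A) (b' : B) :
    μ (a ⊗ₜ b) (a' ⊗ₜ b') = map (mulLeft k a) (mulRight k b') (R (b ⊗ₜ a')) :=
  twistedMul_tmul a b a' b'

lemma twistedMul_one_tmul (b : B) (a : A) (b' : B) :
    μ (1 ⊗ₜ b) (a ⊗ₜ b') = lTensor A (mulRight k b') (R (b ⊗ₜ a)) := by
  rw [twistedMul_tmul_eq_map, mulLeft_one]
  rfl

lemma twistedMul_tmul_one (hR : IsTwistingMap R) (u : A ⊗[k] B) (b : B) :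
    μ u (1 ⊗ₜ b) = lTensor A (mulRight k b) u := by
  induction u using TensorProduct.induction_on with
  | zero => simp
  | tmul x y => simp [twistedMul_tmul_eq_map, hR.1 y]
  | add u v hu hv => simp only [map_add, LinearMap.add_apply, hu, hv]

lemma map_mulLeft_mulRight_twistedMul_one_tmul (x : A) (b y : B) (v : A ⊗[k] B) :
    map (mulLeft k x) (mulRight k y) (μ (1 ⊗ₜ b) v) =
      μ (x ⊗ₜ b) (lTensor A (mulRight k y) v) := by
  induction v using TensorProduct.induction_on with
  | zero => simp
  | tmul p q =>
    rw [twistedMul_one_tmul, lTensor_tmul, twistedMul_tmul_eq_map, map_lTensor, mulRight_apply,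
      mulRight_mul]
  | add u v hu hv => simp only [map_add, hu, hv]

lemma map_mulLeft_mulRight_twistedMul_tmul_one (x p : A) (y : B) (u : A ⊗[k] B) :
    map (mulLeft k x) (mulRight k y) (μ u (p ⊗ₜ 1)) =
      μ (rTensor B (mulLeft k x) u) (p ⊗ₜ y) := by
  induction u using TensorProduct.induction_on with
  | zero => simp
  | tmul w z =>
    rw [twistedMul_tmul_eq_map, mulRight_one, map_map, comp_id, ← mulLeft_mul, rTensor_tmul,
      mulLeft_apply, twistedMul_tmul_eq_map]
  | add u v hu hv => simp only [map_add, LinearMap.add_apply, hu, hv]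

lemma IsTwistingMap.apply_tmul_mul_s1 (hR : IsTwistingMap R) (b : B) (a a' : A) :
    R (b ⊗ₜ (a * a')) = μ (R (b ⊗ₜ a)) (a' ⊗ₜ 1) := by
  rw [twistedMul_tmul_unit_eq (fun b => mul_one b)]
  simpa using congr($(hR.2.2.1) (b ⊗ₜ (a ⊗ₜ a')))

lemma IsTwistingMap.apply_mul_tmul_s1 (hR : IsTwistingMap R) (b b' : B) (a : A) :
    R ((b * b') ⊗ₜ a) = μ (1 ⊗ₜ b) (R (b' ⊗ₜ a)) := by
  rw [twistedMul_unit_tmul_eq (fun a => one_mul a)]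
  simpa using congr($(hR.2.2.2) ((b ⊗ₜ b') ⊗ₜ a))

lemma twistedMul_map_tmul (hR : IsTwistingMap R) (a : A) (b' : B) (a'' : A) (b'' : B)
    (u : A ⊗[k] B) :
    μ (map (mulLeft k a) (mulRight k b') u) (a'' ⊗ₜ b'') =
      μ (rTensor B (mulLeft k a) u) (lTensor A (mulRight k b'') (R (b' ⊗ₜ a''))) := by
  induction u using TensorProduct.induction_on with
  | zero => simp
  | tmul w z =>
    simp only [map_tmul, rTensor_tmul, mulLeft_apply, mulRight_apply]
    rw [twistedMul_tmul_eq_map, hR.apply_mul_tmul_s1, map_mulLeft_mulRight_twistedMul_one_tmul]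
  | add u v hu hv => simp only [map_add, LinearMap.add_apply, hu, hv]

lemma tmul_twistedMul_map (hR : IsTwistingMap R) (a : A) (b : B) (a' : A) (b'' : B)
    (v : A ⊗[k] B) :
    μ (a ⊗ₜ b) (map (mulLeft k a') (mulRight k b'') v) =
      μ (rTensor B (mulLeft k a) (R (b ⊗ₜ a'))) (lTensor A (mulRight k b'') v) := by
  induction v using TensorProduct.induction_on with
  | zero => simp
  | tmul p q =>
    simp only [map_tmul, lTensor_tmul, mulLeft_apply, mulRight_apply]
    rw [twistedMul_tmul_eq_map, hR.apply_tmul_mul_s1, map_mulLeft_mulRight_twistedMul_tmul_one]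
  | add u v hu hv => simp only [map_add, hu, hv]

theorem IsTwistingMap.twistedMul_assoc (hR : IsTwistingMap R) (x y z : A ⊗[k] B) :
    μ (μ x y) z = μ x (μ y z) := by
  induction x using TensorProduct.induction_on with
  | zero => simp
  | add x x' hx hx' => simp only [map_add, LinearMap.add_apply, hx, hx']
  | tmul a b =>
    induction y using TensorProduct.induction_on with
    | zero => simp
    | add y y' hy hy' => simp only [map_add, LinearMap.add_apply, hy, hy']
    | tmul a' b' =>
      induction z using TensorProduct.induction_on with
      | zero => simp
      | add z z' hz hz' => simp only [map_add, hz, hz']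
      | tmul a'' b'' =>
        rw [twistedMul_tmul_eq_map a b, twistedMul_map_tmul hR, twistedMul_tmul_eq_map a' b',
          tmul_twistedMul_map hR]

end TwistedTensorProduct

section Twist
variable {A B : Type*} [Ring A] [Algebra k A] [Ring B] [Algebra k B]
  {R : B ⊗[k] A →ₗ[k] A ⊗[k] B} {st : A →ₗ[k] A →ₗ[k] A} {ρ lam : A →ₗ[k] A ⊗[k] B}

local notation "μ" => twistedMul (mul' k A) (mul' k B) R
local notation "R'" => twistPrime (mul' k B) R ρ lam
local notation "μ'" => twistedMul (TensorProduct.lift st) (mul' k B) R'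

lemma one_twistedMul (hR : IsTwistingMap R) (v : A ⊗[k] B) : μ (1 ⊗ₜ 1) v = v := by
  induction v using TensorProduct.induction_on with
  | zero => simp
  | tmul x y => rw [twistedMul_one_tmul, hR.2.1, lTensor_tmul, mulRight_apply, one_mul]
  | add s t hs ht => simp only [map_add, hs, ht]

lemma rightExtend_tmul_eq_twistedMul (hR : IsTwistingMap R) (f : A →ₗ[k] A ⊗[k] B)
    (x : A) (y : B) : rightExtend f (x ⊗ₜ y) = μ (f x) (1 ⊗ₜ y) := by
  rw [rightExtend_tmul, twistedMul_tmul_one hR]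

lemma twistPrime_tmul (b : B) (a : A) : R' (b ⊗ₜ a) = rightExtend lam (μ (1 ⊗ₜ b) (ρ a)) := by
  simp only [twistPrime, coe_comp, Function.comp_apply, LinearEquiv.coe_coe, map_tmul,
    id_coe, id_eq]
  induction ρ a using TensorProduct.induction_on with
  | zero => simp
  | add s t hs ht => simp only [tmul_add, map_add, hs, ht]
  | tmul x y =>
    rw [assoc_symm_tmul, map_tmul, twistedMul_one_tmul, id_apply]
    induction R (b ⊗ₜ x) using TensorProduct.induction_on with
    | zero => simp
    | add s t hs ht => simp only [add_tmul, map_add, hs, ht]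
    | tmul p q =>
      rw [lTensor_tmul, mulRight_apply, rightExtend_tmul]
      simp only [map_tmul, id_coe, id_eq]
      induction lam p using TensorProduct.induction_on with
      | zero => simp
      | add s t hs ht => simp only [add_tmul, map_add, hs, ht]
      | tmul c d => simp [mul_assoc]

lemma twistPrime_tmul_one (hR : IsTwistingMap R) (hρ_one : ρ 1 = 1 ⊗ₜ 1)
    (hlam_one : lam 1 = 1 ⊗ₜ 1) (b : B) : R' (b ⊗ₜ 1) = 1 ⊗ₜ b := by
  rw [twistPrime_tmul, hρ_one, twistedMul_tmul_one hR, lTensor_tmul, mulRight_apply, mul_one,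
    rightExtend_tmul, hlam_one, lTensor_tmul, mulRight_apply, one_mul]

lemma twistPrime_one_tmul (hR : IsTwistingMap R)
    (h48 : ∀ a, sweedlerContract (mul' k B) ρ lam a = a ⊗ₜ 1) (a : A) :
    R' (1 ⊗ₜ a) = a ⊗ₜ 1 := by
  rw [twistPrime_tmul, one_twistedMul hR]
  exact h48 a

lemma rightExtend_twistPrime_tmul
    (h49 : ∀ a, sweedlerContract (mul' k B) lam ρ a = a ⊗ₜ 1) (b : B) (a : A) :
    rightExtend ρ (R' (b ⊗ₜ a)) = μ (1 ⊗ₜ b) (ρ a) := by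
  rw [twistPrime_tmul]
  exact leftInverse_rightExtend h49 _

lemma rightExtend_map_mulRight (hR : IsTwistingMap R)
    (hρ_mul : ∀ a a', ρ (st a a') = μ (ρ a) (ρ a')) (a : A) (b : B) (u : A ⊗[k] B) :
    rightExtend ρ (map (st a) (mulRight k b) u) = μ (μ (ρ a) (rightExtend ρ u)) (1 ⊗ₜ b) := by
  induction u using TensorProduct.induction_on with
  | zero => simp
  | add s t hs ht => simp only [map_add, LinearMap.add_apply, hs, ht]
  | tmul x y =>
    have hy : (1 : A) ⊗ₜ[k] (y * b) = μ (1 ⊗ₜ y) (1 ⊗ₜ b) := by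
      rw [twistedMul_tmul_one hR, lTensor_tmul, mulRight_apply]
    rw [map_tmul, mulRight_apply, rightExtend_tmul_eq_twistedMul hR, hρ_mul,
      rightExtend_tmul_eq_twistedMul hR, hy, hR.twistedMul_assoc, hR.twistedMul_assoc,
      hR.twistedMul_assoc]

lemma rightExtend_twistedMul (hR : IsTwistingMap R)
    (hρ_mul : ∀ a a', ρ (st a a') = μ (ρ a) (ρ a'))
    (h49 : ∀ a, sweedlerContract (mul' k B) lam ρ a = a ⊗ₜ 1) (x y : A ⊗[k] B) :
    rightExtend ρ (μ' x y) = μ (rightExtend ρ x) (rightExtend ρ y) := by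
  induction x using TensorProduct.induction_on with
  | zero => simp
  | add x x' hx hx' => simp only [map_add, LinearMap.add_apply, hx, hx']
  | tmul a b =>
    induction y using TensorProduct.induction_on with
    | zero => simp
    | add y y' hy hy' => simp only [map_add, hy, hy']
    | tmul a' b' =>
      have hst : TensorProduct.lift st ∘ₗ mk k A A a = st a := by ext; simp
      have hmul : mul' k B ∘ₗ (mk k B B).flip b' = mulRight k b' := rfl
      rw [twistedMul_tmul, hst, hmul, rightExtend_map_mulRight hR hρ_mul,
        rightExtend_twistPrime_tmul h49,
        rightExtend_tmul_eq_twistedMul hR, rightExtend_tmul_eq_twistedMul hR]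
      simp only [hR.twistedMul_assoc]

theorem twistPrime_twistedMul_assoc (hR : IsTwistingMap R)
    (hρ_mul : ∀ a a', ρ (st a a') = μ (ρ a) (ρ a'))
    (h48 : ∀ a, sweedlerContract (mul' k B) ρ lam a = a ⊗ₜ 1)
    (h49 : ∀ a, sweedlerContract (mul' k B) lam ρ a = a ⊗ₜ 1) (x y z : A ⊗[k] B) :
    μ' (μ' x y) z = μ' x (μ' y z) :=
  (leftInverse_rightExtend h48).injective <| by
    simp only [rightExtend_twistedMul hR hρ_mul h49, hR.twistedMul_assoc]

end Twist

theorem twistPrime_isTwistingMap_general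
    {A B : Type*} [Ring A] [Algebra k A] [Ring B] [Algebra k B]
    (R : B ⊗[k] A →ₗ[k] A ⊗[k] B) (hR : IsTwistingMap R)
    -- the second algebra structure `A'` on the vector space `A`, same unit `1`
    (st : A →ₗ[k] A →ₗ[k] A)
    (hst_one : ∀ a : A, st 1 a = a)
    (ρ lam : A →ₗ[k] A ⊗[k] B)
    -- `ρ` is an algebra map from `A'` to `A ⊗_R B`
    (hρ_one : ρ 1 = (1 : A) ⊗ₜ[k] (1 : B))
    (hρ_mul : ∀ a a' : A, ρ (st a a') =
      mulOf (LinearMap.mul' k A) (LinearMap.mul' k B) R (ρ a ⊗ₜ[k] ρ a'))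
    (hlam_one : lam 1 = (1 : A) ⊗ₜ[k] (1 : B))
    -- condition (4.8): `a₍₀₎_[0] ⊗ a₍₀₎_[1] a₍₁₎ = a ⊗ 1`
    (h48 : ∀ a : A, sweedlerContract (LinearMap.mul' k B) ρ lam a = a ⊗ₜ[k] (1 : B))
    -- condition (4.9): `a_[0]₍₀₎ ⊗ a_[0]₍₁₎ a_[1] = a ⊗ 1`
    (h49 : ∀ a : A, sweedlerContract (LinearMap.mul' k B) lam ρ a = a ⊗ₜ[k] (1 : B)) :
    IsTwistingMapMul (TensorProduct.lift st) (1 : A) (LinearMap.mul' k B) (1 : B)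
      (twistPrime (LinearMap.mul' k B) R ρ lam) :=
  isTwistingMapMul_of_twistedMul_assoc (fun a => by simpa using hst_one a) (fun b => mul_one b)
    (twistPrime_tmul_one hR hρ_one hlam_one) (twistPrime_one_tmul hR h48)
    (twistPrime_twistedMul_assoc hR hρ_mul h48 h49)

/-- invariance under twisting, first part. Given a twisted
tensor product `A ⊗_R B`, a second algebra structure `*` (given by `st`) on `A`
with the same unit, and maps `ρ, λ` satisfying the stated conditions, the map
`R'(b ⊗ a) = ((a₍₀₎)_R)_[0] ⊗ ((a₍₀₎)_R)_[1] b_R a₍₁₎` is a twisting map. -/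
theorem twistPrime_isTwistingMap
    {A B : Type*} [Ring A] [Algebra k A] [Ring B] [Algebra k B]
    (R : B ⊗[k] A →ₗ[k] A ⊗[k] B) (hR : IsTwistingMap R)
    -- the second algebra structure `A'` on the vector space `A`, same unit `1`
    (st : A →ₗ[k] A →ₗ[k] A)
    (hst_one : ∀ a : A, st 1 a = a) (hst_one' : ∀ a : A, st a 1 = a)
    (hst_assoc : ∀ a b c : A, st (st a b) c = st a (st b c))
    (ρ lam : A →ₗ[k] A ⊗[k] B)
    -- `ρ` is an algebra map from `A'` to `A ⊗_R B`
    (hρ_one : ρ 1 = (1 : A) ⊗ₜ[k] (1 : B))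
    (hρ_mul : ∀ a a' : A, ρ (st a a') =
      mulOf (LinearMap.mul' k A) (LinearMap.mul' k B) R (ρ a ⊗ₜ[k] ρ a'))
    (hlam_one : lam 1 = (1 : A) ⊗ₜ[k] (1 : B))
    -- condition (4.7): `λ(aa') = a_[0] * (a'_R)_[0] ⊗ (a'_R)_[1] (a_[1])_R`
    (h47 : ∀ a a' : A, lam (a * a') =
      lamMulMap (TensorProduct.lift st) (LinearMap.mul' k B) R lam (a ⊗ₜ[k] a'))
    -- condition (4.8): `a₍₀₎_[0] ⊗ a₍₀₎_[1] a₍₁₎ = a ⊗ 1`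
    (h48 : ∀ a : A, sweedlerContract (LinearMap.mul' k B) ρ lam a = a ⊗ₜ[k] (1 : B))
    -- condition (4.9): `a_[0]₍₀₎ ⊗ a_[0]₍₁₎ a_[1] = a ⊗ 1`
    (h49 : ∀ a : A, sweedlerContract (LinearMap.mul' k B) lam ρ a = a ⊗ₜ[k] (1 : B)) :
    IsTwistingMapMul (TensorProduct.lift st) (1 : A) (LinearMap.mul' k B) (1 : B)
      (twistPrime (LinearMap.mul' k B) R ρ lam) :=
  twistPrime_isTwistingMap_general R hR st hst_one ρ lam hρ_one hρ_mul hlam_one h48 h49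

end IUT
end
end

section
/- Let A, B be k-algebras and R : B ⊗ A → A ⊗ B a linear map (notation R(b ⊗ a) = a_R ⊗ b_R). Suppose μ : B ⊗ A → A, μ(b ⊗ a) = b·a, and ρ : A → A ⊗ B, ρ(a) = a_(0) ⊗ a_(1), are linear maps, and define a * a' := a_(0)(a_(1)·a'). Assume: ρ(1) = 1 ⊗ 1; 1·a = a; a_(0)(a_(1)·1) = a; b·(a*a') = (a_(0))_R (b_R a_(1) · a'); and ρ(a*a') = a_(0) (a'_(0))_R ⊗ (a_(1))_R a'_(1) for all a, a' ∈ A, b ∈ B. Then (A, *, 1) is an associative unital algebra. -/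
open TensorProduct LinearMap

noncomputable section
namespace IUT

variable {k : Type*} [Field k]

section Stmt3
variable {A B : Type*} [Ring A] [Algebra k A] [Ring B] [Algebra k B]

/-- `a * a' := a₍₀₎ (a₍₁₎ · a')`. -/
def starOf (ρ : A →ₗ[k] A ⊗[k] B) (μ : B ⊗[k] A →ₗ[k] A) :
    A ⊗[k] A →ₗ[k] A :=
  LinearMap.mul' k A
    ∘ₗ TensorProduct.map LinearMap.id μ
    ∘ₗ (TensorProduct.assoc k A B A).toLinearMap
    ∘ₗ TensorProduct.map ρ LinearMap.id

/-- `b ⊗ (a ⊗ a') ↦ (a₍₀₎)_R (b_R a₍₁₎ · a')`, the right-hand side of (4.2). -/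
def rhs42 (ρ : A →ₗ[k] A ⊗[k] B) (μ : B ⊗[k] A →ₗ[k] A)
    (R : B ⊗[k] A →ₗ[k] A ⊗[k] B) : B ⊗[k] (A ⊗[k] A) →ₗ[k] A :=
  LinearMap.mul' k A
    ∘ₗ TensorProduct.map LinearMap.id μ
    ∘ₗ (TensorProduct.assoc k A B A).toLinearMap
    ∘ₗ TensorProduct.map
        (TensorProduct.map LinearMap.id (LinearMap.mul' k B)
          ∘ₗ (TensorProduct.assoc k A B B).toLinearMap) LinearMap.id
    ∘ₗ TensorProduct.map (TensorProduct.map R LinearMap.id) LinearMap.id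
    ∘ₗ TensorProduct.map (TensorProduct.assoc k B A B).symm.toLinearMap LinearMap.id
    ∘ₗ TensorProduct.map (TensorProduct.map LinearMap.id ρ) LinearMap.id
    ∘ₗ (TensorProduct.assoc k B A A).symm.toLinearMap

/-!
Write `a * a' = a₍₀₎ (a₍₁₎ · a')` as `mulAct μ (ρ a ⊗ a')`. The left unit comes from
`ρ 1 = 1 ⊗ 1` and `1 · a = a`. For associativity, (4.3) rewrites `(a * b) * c` as
`mulAct μ (a₍₀₎ b₍₀₎_R ⊗ a₍₁₎_R b₍₁₎ ⊗ c)`; the factor `a₍₀₎` pulls out on the left, and what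
remains, `b₍₀₎_R (a₍₁₎_R b₍₁₎ · c)`, is the right-hand side of (4.2) for `a₍₁₎ · (b * c)`.
So `(a * b) * c = a₍₀₎ (a₍₁₎ · (b * c)) = a * (b * c)`.
-/

def mulAct (μ : B ⊗[k] A →ₗ[k] A) : (A ⊗[k] B) ⊗[k] A →ₗ[k] A :=
  LinearMap.mul' k A
    ∘ₗ TensorProduct.map LinearMap.id μ
    ∘ₗ (TensorProduct.assoc k A B A).toLinearMap

/-- `(b ⊗ (a ⊗ b')) ⊗ a' ↦ a_R (b_R b' · a')`. -/
def twistAct (μ : B ⊗[k] A →ₗ[k] A) (R : B ⊗[k] A →ₗ[k] A ⊗[k] B) :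
    (B ⊗[k] (A ⊗[k] B)) ⊗[k] A →ₗ[k] A :=
  mulAct μ
    ∘ₗ TensorProduct.map
        (TensorProduct.map LinearMap.id (LinearMap.mul' k B)
          ∘ₗ (TensorProduct.assoc k A B B).toLinearMap) LinearMap.id
    ∘ₗ TensorProduct.map (TensorProduct.map R LinearMap.id) LinearMap.id
    ∘ₗ TensorProduct.map (TensorProduct.assoc k B A B).symm.toLinearMap LinearMap.id

@[simp]
lemma mulAct_tmul (μ : B ⊗[k] A →ₗ[k] A) (x : A) (y : B) (a : A) :
    mulAct μ ((x ⊗ₜ[k] y) ⊗ₜ[k] a) = x * μ (y ⊗ₜ[k] a) := by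
  simp [mulAct]

lemma starOf_tmul (ρ : A →ₗ[k] A ⊗[k] B) (μ : B ⊗[k] A →ₗ[k] A) (a a' : A) :
    starOf ρ μ (a ⊗ₜ[k] a') = mulAct μ (ρ a ⊗ₜ[k] a') := rfl

lemma rhs42_tmul (ρ : A →ₗ[k] A ⊗[k] B) (μ : B ⊗[k] A →ₗ[k] A)
    (R : B ⊗[k] A →ₗ[k] A ⊗[k] B) (b : B) (a a' : A) :
    rhs42 ρ μ R (b ⊗ₜ[k] (a ⊗ₜ[k] a')) = twistAct μ R ((b ⊗ₜ[k] ρ a) ⊗ₜ[k] a') := rfl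

lemma starOf_one_tmul {ρ : A →ₗ[k] A ⊗[k] B} {μ : B ⊗[k] A →ₗ[k] A}
    (hρ_one : ρ 1 = (1 : A) ⊗ₜ[k] (1 : B)) (hμ_one : ∀ a : A, μ ((1 : B) ⊗ₜ[k] a) = a)
    (a : A) : starOf ρ μ ((1 : A) ⊗ₜ[k] a) = a := by
  rw [starOf_tmul, hρ_one, mulAct_tmul, hμ_one, one_mul]

lemma mulAct_mulOf_tmul (μ : B ⊗[k] A →ₗ[k] A) (R : B ⊗[k] A →ₗ[k] A ⊗[k] B)
    (x : A) (y : B) (s : A ⊗[k] B) (c : A) :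
    mulAct μ (mulOf (LinearMap.mul' k A) (LinearMap.mul' k B) R ((x ⊗ₜ[k] y) ⊗ₜ[k] s) ⊗ₜ[k] c)
      = x * twistAct μ R ((y ⊗ₜ[k] s) ⊗ₜ[k] c) := by
  induction s using TensorProduct.induction_on with
  | zero => simp
  | tmul u v =>
    simp only [mulOf, twistAct, LinearMap.comp_apply, TensorProduct.map_tmul, LinearMap.id_coe,
      id_eq, LinearEquiv.coe_coe, TensorProduct.assoc_tmul, TensorProduct.assoc_symm_tmul]
    induction R (y ⊗ₜ[k] u) using TensorProduct.induction_on with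
    | zero => simp
    | tmul p q => simp [mul_assoc]
    | add r₁ r₂ h₁ h₂ => simp_all [add_tmul, tmul_add, mul_add]
  | add s₁ s₂ h₁ h₂ => simp_all [tmul_add, add_tmul, mul_add]

lemma mulAct_mulOf_eq_mulAct_starOf {ρ : A →ₗ[k] A ⊗[k] B} {μ : B ⊗[k] A →ₗ[k] A}
    {R : B ⊗[k] A →ₗ[k] A ⊗[k] B}
    (h42 : ∀ (b : B) (a a' : A),
      μ (b ⊗ₜ[k] starOf ρ μ (a ⊗ₜ[k] a')) = rhs42 ρ μ R (b ⊗ₜ[k] (a ⊗ₜ[k] a')))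
    (t : A ⊗[k] B) (b c : A) :
    mulAct μ (mulOf (LinearMap.mul' k A) (LinearMap.mul' k B) R (t ⊗ₜ[k] ρ b) ⊗ₜ[k] c) =
      mulAct μ (t ⊗ₜ[k] starOf ρ μ (b ⊗ₜ[k] c)) := by
  induction t using TensorProduct.induction_on with
  | zero => simp
  | tmul x y => rw [mulAct_mulOf_tmul, mulAct_tmul, h42, rhs42_tmul]
  | add t₁ t₂ h₁ h₂ => simp_all [add_tmul]

lemma starOf_assoc {ρ : A →ₗ[k] A ⊗[k] B} {μ : B ⊗[k] A →ₗ[k] A}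
    {R : B ⊗[k] A →ₗ[k] A ⊗[k] B}
    (h42 : ∀ (b : B) (a a' : A),
      μ (b ⊗ₜ[k] starOf ρ μ (a ⊗ₜ[k] a')) = rhs42 ρ μ R (b ⊗ₜ[k] (a ⊗ₜ[k] a')))
    (h43 : ∀ a a' : A, ρ (starOf ρ μ (a ⊗ₜ[k] a')) =
      mulOf (LinearMap.mul' k A) (LinearMap.mul' k B) R (ρ a ⊗ₜ[k] ρ a'))
    (a b c : A) :
    starOf ρ μ (starOf ρ μ (a ⊗ₜ[k] b) ⊗ₜ[k] c) =
      starOf ρ μ (a ⊗ₜ[k] starOf ρ μ (b ⊗ₜ[k] c)) := by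
  rw [starOf_tmul, h43, mulAct_mulOf_eq_mulAct_starOf h42]
  rfl

/-- Under conditions (4.1)–(4.3), the product
`a * a' = a₍₀₎ (a₍₁₎ · a')` makes `(A, *, 1)` an associative unital algebra. -/
theorem starOf_associative_unital
    (R : B ⊗[k] A →ₗ[k] A ⊗[k] B)
    (μ : B ⊗[k] A →ₗ[k] A) (ρ : A →ₗ[k] A ⊗[k] B)
    -- (4.1)
    (hρ_one : ρ 1 = (1 : A) ⊗ₜ[k] (1 : B))
    (hμ_one : ∀ a : A, μ ((1 : B) ⊗ₜ[k] a) = a)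
    (hstar_one : ∀ a : A, starOf ρ μ (a ⊗ₜ[k] (1 : A)) = a)
    -- (4.2): `b · (a * a') = a₍₀₎_R (b_R a₍₁₎ · a')`
    (h42 : ∀ (b : B) (a a' : A),
      μ (b ⊗ₜ[k] starOf ρ μ (a ⊗ₜ[k] a')) = rhs42 ρ μ R (b ⊗ₜ[k] (a ⊗ₜ[k] a')))
    -- (4.3): `ρ(a * a') = a₍₀₎ a'₍₀₎_R ⊗ a₍₁₎_R a'₍₁₎`
    (h43 : ∀ a a' : A, ρ (starOf ρ μ (a ⊗ₜ[k] a')) =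
      mulOf (LinearMap.mul' k A) (LinearMap.mul' k B) R (ρ a ⊗ₜ[k] ρ a')) :
    (∀ a : A, starOf ρ μ ((1 : A) ⊗ₜ[k] a) = a) ∧
    (∀ a : A, starOf ρ μ (a ⊗ₜ[k] (1 : A)) = a) ∧
    (∀ a b c : A,
      starOf ρ μ (starOf ρ μ (a ⊗ₜ[k] b) ⊗ₜ[k] c) =
      starOf ρ μ (a ⊗ₜ[k] starOf ρ μ (b ⊗ₜ[k] c))) :=
  ⟨starOf_one_tmul hρ_one hμ_one, hstar_one, starOf_assoc h42 h43⟩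

end Stmt3
end IUT
end
end
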